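/- Let σ > 0, x̃ ∈ X, and let Ψ(y,z) = L_σ(y,z;x̃). Define ψ(y) = inf_z Ψ(y,z). Then for all y ∈ Y, ψ(y) = h*(y) + p*(Prox_{p*/σ}(x̃/σ − A*y + c)) + (1/(2σ))‖Prox_{σp}(x̃ − σ(A*y − c))‖² − (1/(2σ))‖x̃‖²; ψ is continuously differentiable on int(dom h*) with ∇ψ(y) = ∇h*(y) − A Prox_{σp}(x̃ − σ(A*y − c)); and (ȳ, z̄) is the minimizer of Ψ if and only if ȳ minimizes ψ and z̄ = Prox_{p*/σ}(x̃/σ − A*ȳ + c). -/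

import Mathlib

/- STATEMENT 9: For Ψ(y,z) = L_σ(y,z;x̃) and ψ(y) = inf_z Ψ(y,z), one has, for all y,
ψ(y) = h*(y) + p*(Prox_{p*/σ}(x̃/σ − A*y + c)) + (1/2σ)‖Prox_{σp}(x̃ − σ(A*y − c))‖²
       − (1/2σ)‖x̃‖²;
ψ is continuously differentiable on int(dom h*) with
∇ψ(y) = ∇h*(y) − A Prox_{σp}(x̃ − σ(A*y − c)); and (ȳ, z̄) minimizes Ψ iff ȳ minimizes ψ
and z̄ = Prox_{p*/σ}(x̃/σ − A*ȳ + c). -/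

open Set Filter Topology Classical

noncomputable section

/-- Convexity of an `EReal`-valued function. -/
def EConvex {E : Type*} [AddCommGroup E] [Module ℝ E] (g : E → EReal) : Prop :=
  ∀ u v : E, ∀ a b : ℝ, 0 ≤ a → 0 ≤ b → a + b = 1 →
    g (a • u + b • v) ≤ (a : EReal) * g u + (b : EReal) * g v

/-- The Fenchel conjugate of an `EReal`-valued function. -/
def conjE {E : Type*} [NormedAddCommGroup E] [InnerProductSpace ℝ E]
    (p : E → EReal) (z : E) : EReal :=
  ⨆ u : E, (((inner ℝ u z : ℝ) : EReal) - p u)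

variable {X Y : Type*} [NormedAddCommGroup X] [InnerProductSpace ℝ X] [FiniteDimensional ℝ X]
  [NormedAddCommGroup Y] [InnerProductSpace ℝ Y] [FiniteDimensional ℝ Y]

/-- The augmented Lagrangian function associated with (D):
`L_σ(y,z;x̃) = h*(y) + p*(z) − ⟨x̃, A*y + z − c⟩ + (σ/2)‖A*y + z − c‖²`. -/
def ALfun (A : X →L[ℝ] Y) (c : X) (hstar : Y → EReal) (pstar : X → EReal)
    (σ : ℝ) (x : X) (w : Y × X) : EReal :=
  hstar w.1 + pstar w.2 +
    (((σ / 2) * ‖ContinuousLinearMap.adjoint A w.1 + w.2 - c‖ ^ 2 -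
        (inner ℝ x (ContinuousLinearMap.adjoint A w.1 + w.2 - c) : ℝ) : ℝ) : EReal)

/-! For fixed `y`, the `z`-dependent part of `L_σ(y, z; x̃)` is `p*(z) + (σ/2)‖z - s(y)‖²` with
`s(y) = x̃/σ - A*y + c`, so the infimum over `z` is attained exactly at `Prox_{p*/σ}(s(y))`; this
gives the closed form of `ψ` and the characterization of the minimizers of `Ψ`. The Moreau
decomposition `Prox_{σp}(σ s) = σ (s - Prox_{p*/σ}(s))` rewrites the remaining quadratic term.
The `z`-part of `ψ` is `σ` times the Moreau envelope of `p*/σ` at `s(y)`, whose gradient is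
`s - Prox_{p*/σ}(s)` because the prox map is nonexpansive, and the chain rule gives `∇ψ`.
Finally, the gradient of a differentiable convex function is continuous on an open set. -/

open scoped InnerProduct RealInnerProductSpace

lemma nonneg_of_forall_nonneg_add_mul {a b : ℝ} (h : ∀ t ∈ Ioo (0 : ℝ) 1, 0 ≤ a + t * b) :
    0 ≤ a := by
  have hlim : Tendsto (fun t : ℝ => a + t * b) (𝓝[>] 0) (𝓝 a) := by
    have : Continuous fun t : ℝ => a + t * b := by fun_prop
    simpa using (this.tendsto 0).mono_left nhdsWithin_le_nhds
  exact ge_of_tendsto hlim (Filter.mem_of_superset (Ioo_mem_nhdsGT one_pos) h)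

section ProxOn

variable {E : Type*} [NormedAddCommGroup E] [InnerProductSpace ℝ E]
  {S : Set E} {f : E → ℝ} {τ : ℝ} {x x' q q' u : E}

def IsProxOn (S : Set E) (f : E → ℝ) (τ : ℝ) (x q : E) : Prop :=
  q ∈ S ∧ ∀ u ∈ S, τ * f q + 1 / 2 * ‖q - x‖ ^ 2 ≤ τ * f u + 1 / 2 * ‖u - x‖ ^ 2

lemma IsProxOn.inner_le (hτ : 0 ≤ τ) (hf : ConvexOn ℝ S f) (hq : IsProxOn S f τ x q)
    (hu : u ∈ S) : ⟪x - q, u - q⟫ ≤ τ * (f u - f q) := by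
  suffices 0 ≤ τ * (f u - f q) - ⟪x - q, u - q⟫ by linarith
  refine nonneg_of_forall_nonneg_add_mul (b := 1 / 2 * ‖u - q‖ ^ 2) fun t ht => ?_
  have h1t : 0 ≤ 1 - t := by linarith [ht.2]
  have hmin := hq.2 _ (hf.1 hq.1 hu h1t ht.1.le (sub_add_cancel 1 t))
  have hconv := hf.2 hq.1 hu h1t ht.1.le (sub_add_cancel 1 t)
  have hsq : ‖(1 - t) • q + t • u - x‖ ^ 2
      = ‖q - x‖ ^ 2 - 2 * t * ⟪x - q, u - q⟫ + t ^ 2 * ‖u - q‖ ^ 2 := by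
    have : (1 - t) • q + t • u - x = (q - x) + t • (u - q) := by
      rw [sub_smul, one_smul, smul_sub]; abel
    rw [this, norm_add_sq_real, inner_smul_right, norm_smul, Real.norm_eq_abs, abs_of_pos ht.1,
      ← neg_sub x q, inner_neg_left]
    ring
  simp only [smul_eq_mul] at hconv
  refine (mul_nonneg_iff_of_pos_left ht.1).mp ?_
  nlinarith [mul_le_mul_of_nonneg_left hconv hτ]

lemma IsProxOn.norm_sub_sq_le_inner (hτ : 0 ≤ τ) (hf : ConvexOn ℝ S f)
    (hq : IsProxOn S f τ x q) (hq' : IsProxOn S f τ x' q') :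
    ‖q - q'‖ ^ 2 ≤ ⟪x - x', q - q'⟫ := by
  have h := hq.inner_le hτ hf hq'.1
  have h' := hq'.inner_le hτ hf hq.1
  have hid : ⟪x - q, q' - q⟫ + ⟪x' - q', q - q'⟫ = ‖q - q'‖ ^ 2 - ⟪x - x', q - q'⟫ := by
    rw [← neg_sub q q', inner_neg_right, ← sub_eq_neg_add, ← inner_sub_left,
      show x' - q' - (x - q) = (q - q') - (x - x') by abel, inner_sub_left,
      real_inner_self_eq_norm_sq]
  linarith

lemma IsProxOn.unique (hτ : 0 ≤ τ) (hf : ConvexOn ℝ S f) (hq : IsProxOn S f τ x q)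
    (hq' : IsProxOn S f τ x q') : q = q' := by
  have h := hq.norm_sub_sq_le_inner hτ hf hq'
  rw [sub_self, inner_zero_left] at h
  exact sub_eq_zero.mp (norm_eq_zero.mp (pow_eq_zero_iff two_ne_zero |>.mp
    (le_antisymm h (sq_nonneg _))))

lemma IsProxOn.norm_sub_le (hτ : 0 ≤ τ) (hf : ConvexOn ℝ S f) (hq : IsProxOn S f τ x q)
    (hq' : IsProxOn S f τ x' q') : ‖q - q'‖ ≤ ‖x - x'‖ := by
  have h := (hq.norm_sub_sq_le_inner hτ hf hq').trans (real_inner_le_norm _ _)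
  nlinarith [norm_nonneg (q - q'), norm_nonneg (x - x')]

variable {P : E → E}

lemma lipschitzWith_one_of_isProxOn (hτ : 0 ≤ τ) (hf : ConvexOn ℝ S f)
    (hP : ∀ x, IsProxOn S f τ x (P x)) : LipschitzWith 1 P :=
  LipschitzWith.of_dist_le_mul fun x x' => by
    simpa [dist_eq_norm] using (hP x).norm_sub_le hτ hf (hP x')

/-- When every `P x` is a prox point, this is `τ` times the Moreau envelope of `f` with
parameter `τ`. -/
def proxValue (f : E → ℝ) (τ : ℝ) (P : E → E) (x : E) : ℝ :=
  τ * f (P x) + 1 / 2 * ‖P x - x‖ ^ 2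

lemma proxValue_le (hP : ∀ x, IsProxOn S f τ x (P x)) (x x' : E) :
    proxValue f τ P x' ≤ proxValue f τ P x + ⟪x - P x, x' - x⟫ + 1 / 2 * ‖x' - x‖ ^ 2 := by
  have h := (hP x').2 _ (hP x).1
  unfold proxValue
  have hsq : ‖P x - x'‖ ^ 2 = ‖P x - x‖ ^ 2 + 2 * ⟪x - P x, x' - x⟫ + ‖x' - x‖ ^ 2 := by
    rw [show P x - x' = (P x - x) - (x' - x) by abel, norm_sub_sq_real, ← neg_sub x (P x),
      inner_neg_left]
    ring
  linarith

lemma hasGradientAt_proxValue [CompleteSpace E] (hτ : 0 ≤ τ) (hf : ConvexOn ℝ S f)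
    (hP : ∀ x, IsProxOn S f τ x (P x)) (x : E) :
    HasGradientAt (proxValue f τ P) (x - P x) x := by
  have hbound : ∀ h, |proxValue f τ P (x + h) - proxValue f τ P x - ⟪x - P x, h⟫|
      ≤ 1 / 2 * ‖h‖ ^ 2 := by
    intro h
    have hup := proxValue_le hP x (x + h)
    have hlow := proxValue_le hP (x + h) x
    have hmono : ⟪P (x + h) - P x, h⟫ ≤ ‖h‖ ^ 2 := by
      have := (hP (x + h)).norm_sub_le hτ hf (hP x)
      rw [add_sub_cancel_left] at this
      nlinarith [real_inner_le_norm (P (x + h) - P x) h, norm_nonneg h]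
    have hsplit : ⟪x + h - P (x + h), -h⟫ = ⟪P (x + h) - P x, h⟫ - ⟪x - P x, h⟫ - ‖h‖ ^ 2 := by
      rw [show x + h - P (x + h) = (x - P x) + h - (P (x + h) - P x) by abel,
        inner_neg_right, inner_sub_left, inner_add_left, real_inner_self_eq_norm_sq]
      ring
    simp only [add_sub_cancel_left, sub_add_cancel_left, norm_neg] at hup hlow
    rw [abs_le]
    constructor <;> nlinarith
  rw [hasGradientAt_iff_isLittleO_nhds_zero]
  refine (Asymptotics.IsBigO.of_bound (1 / 2) (Eventually.of_forall fun h => ?_)).trans_isLittleO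
    (Asymptotics.isLittleO_norm_pow_id one_lt_two)
  simpa [Real.norm_eq_abs] using hbound h

end ProxOn

section GradientContinuity

variable {E : Type*} [NormedAddCommGroup E] [InnerProductSpace ℝ E] {U : Set E} {f : E → ℝ}

lemma ConvexOn.add_inner_le_of_hasGradientAt [CompleteSpace E] {a b g : E} (hf : ConvexOn ℝ U f)
    (ha : a ∈ U) (hb : b ∈ U) (hg : HasGradientAt f g a) : f a + ⟪g, b - a⟫ ≤ f b := by
  set ℓ : ℝ →ᵃ[ℝ] E := AffineMap.lineMap a b
  have hderiv : HasDerivAt (f ∘ ℓ) ⟪g, b - a⟫ 0 := by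
    have hg' : HasFDerivAt f (InnerProductSpace.toDual ℝ E g) (ℓ 0) := by
      simpa [ℓ] using hasGradientAt_iff_hasFDerivAt.mp hg
    simpa using hg'.comp_hasDerivAt (0 : ℝ) (AffineMap.hasDerivAt_lineMap (a := a) (b := b))
  have := (hf.comp_affineMap ℓ).le_slope_of_hasDerivAt (x := 0) (y := 1) (by simpa [ℓ] using ha)
    (by simpa [ℓ] using hb) one_pos hderiv
  simp [slope_def_field, ℓ] at this
  linarith

lemma exists_norm_le_inner_eq (d : E) {δ : ℝ} (hδ : 0 ≤ δ) :
    ∃ h : E, ‖h‖ ≤ δ ∧ ⟪d, h⟫ = δ * ‖d‖ := by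
  rcases eq_or_ne d 0 with rfl | hd
  · exact ⟨0, by simpa using hδ, by simp⟩
  refine ⟨(δ / ‖d‖) • d, ?_, ?_⟩
  · rw [norm_smul, Real.norm_of_nonneg (by positivity), div_mul_cancel₀ _ (norm_ne_zero_iff.mpr hd)]
  · rw [real_inner_smul_right, real_inner_self_eq_norm_sq]
    field_simp

/- Testing the gradient inequality at `y` in a direction `h` with `⟪G y - G y₀, h⟫ = δ ‖G y - G y₀‖`
against the first-order expansion at `y₀` bounds `δ ‖G y - G y₀‖` by `ε δ` plus oscillation terms
of `f`, which are small by uniform continuity of `f` near `y₀`. -/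
theorem ConvexOn.continuousOn_of_hasGradientAt [ProperSpace E] {G : E → E} (hU : IsOpen U)
    (hf : ConvexOn ℝ U f) (hG : ∀ y ∈ U, HasGradientAt f (G y) y) : ContinuousOn G U := by
  intro y₀ hy₀
  rw [Metric.continuousWithinAt_iff]
  intro ε hε
  obtain ⟨r, hr, hrU⟩ := Metric.nhds_basis_closedBall.mem_iff.mp (hU.mem_nhds hy₀)
  obtain ⟨δ₁, hδ₁, hexp⟩ := Metric.eventually_nhds_iff.mp
    ((hasGradientAt_iff_isLittleO_nhds_zero.mp (hG y₀ hy₀)).def (by positivity : 0 < ε / 3))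
  obtain ⟨δ, hδ, hδr, hδδ₁⟩ : ∃ δ, 0 < δ ∧ δ ≤ r / 2 ∧ δ < δ₁ :=
    ⟨min δ₁ r / 2, by positivity, by linarith [min_le_right δ₁ r], by linarith [min_le_left δ₁ r]⟩
  obtain ⟨ρ, hρ, hosc⟩ := Metric.uniformContinuousOn_iff.mp
    ((isCompact_closedBall y₀ r).uniformContinuousOn_of_continuous
      ((HasGradientAt.continuousOn hG).mono hrU)) (ε / 3 * δ) (by positivity)
  refine ⟨min ρ (r / 2), by positivity, fun y hyU hy => ?_⟩
  obtain ⟨h, hh, hinner⟩ := exists_norm_le_inner_eq (G y - G y₀) hδ.le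
  have hmem : ∀ z, dist z y₀ < r / 2 →
      z ∈ Metric.closedBall y₀ r ∧ z + h ∈ Metric.closedBall y₀ r :=
    fun z hz => ⟨Metric.mem_closedBall.mpr (by linarith), Metric.mem_closedBall.mpr
      ((dist_triangle _ z _).trans (by rw [dist_self_add_left]; linarith))⟩
  have hy_mem := hmem y (hy.trans_le (min_le_right _ _))
  have hy₀_mem := hmem y₀ (by simpa using hr)
  have hgrad_ineq := hf.add_inner_le_of_hasGradientAt (hrU hy_mem.1) (hrU hy_mem.2) (hG y hyU)
  have hfirst := hexp (y := h) (by rw [dist_zero_right]; linarith)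
  have hosc₁ := hosc _ hy_mem.2 _ hy₀_mem.2 (by simpa using hy.trans_le (min_le_left _ _))
  have hosc₂ := hosc _ hy_mem.1 _ hy₀_mem.1 (hy.trans_le (min_le_left _ _))
  rw [add_sub_cancel_left] at hgrad_ineq
  rw [Real.dist_eq] at hosc₁ hosc₂
  rw [Real.norm_eq_abs] at hfirst
  rw [inner_sub_left] at hinner
  rw [dist_eq_norm]
  refine lt_of_mul_lt_mul_left ?_ hδ.le
  have := abs_lt.mp hosc₁; have := abs_lt.mp hosc₂; have := abs_le.mp hfirst
  nlinarith [mul_le_mul_of_nonneg_left hh hε.le]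

end GradientContinuity

lemma EConvex.convexOn_toReal {E : Type*} [AddCommGroup E] [Module ℝ E] {g : E → EReal}
    (hg : EConvex g) (hb : ∀ u, g u ≠ ⊥) :
    ConvexOn ℝ {u | g u ≠ ⊤} (fun u => (g u).toReal) := by
  have hcomb : ∀ u ∈ {u | g u ≠ ⊤}, ∀ v ∈ {u | g u ≠ ⊤}, ∀ a b : ℝ, 0 ≤ a → 0 ≤ b → a + b = 1 →
      g (a • u + b • v) ≤ ((a * (g u).toReal + b * (g v).toReal : ℝ) : EReal) := by
    intro u hu v hv a b ha hb' hab
    have h := hg u v a b ha hb' hab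
    rwa [← EReal.coe_toReal hu (hb u), ← EReal.coe_toReal hv (hb v), ← EReal.coe_mul,
      ← EReal.coe_mul, ← EReal.coe_add] at h
  refine ⟨fun u hu v hv a b ha hb' hab =>
    ne_top_of_le_ne_top (EReal.coe_ne_top _) (hcomb u hu v hv a b ha hb' hab),
    fun u hu v hv a b ha hb' hab => ?_⟩
  exact (EReal.toReal_le_toReal (hcomb u hu v hv a b ha hb' hab) (hb _)
    (EReal.coe_ne_top _)).trans_eq (EReal.toReal_coe _)

section ExtendedProx

variable {E : Type*} [NormedAddCommGroup E] {g : E → EReal} {τ σ : ℝ} {x q q' : E}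

/-- `q = Prox_{τ g}(x)`. -/
def IsProxPoint (g : E → EReal) (τ : ℝ) (x q : E) : Prop :=
  ∀ u, (τ : EReal) * g q + ((1 / 2 * ‖q - x‖ ^ 2 : ℝ) : EReal)
    ≤ (τ : EReal) * g u + ((1 / 2 * ‖u - x‖ ^ 2 : ℝ) : EReal)

lemma IsProxPoint.ne_top (hτ : 0 < τ) (hb : ∀ u, g u ≠ ⊥) (hne : ∃ u, g u ≠ ⊤)
    (hq : IsProxPoint g τ x q) : g q ≠ ⊤ := by
  obtain ⟨u, hu⟩ := hne
  intro htop
  have h := hq u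
  rw [htop, EReal.mul_top_of_pos (EReal.coe_pos.mpr hτ),
    EReal.top_add_of_ne_bot (EReal.coe_ne_bot _), top_le_iff, ← EReal.coe_toReal hu (hb u),
    ← EReal.coe_mul, ← EReal.coe_add] at h
  exact EReal.coe_ne_top _ h

lemma IsProxPoint.isProxOn [InnerProductSpace ℝ E] (hτ : 0 < τ) (hb : ∀ u, g u ≠ ⊥)
    (hne : ∃ u, g u ≠ ⊤) (hq : IsProxPoint g τ x q) :
    IsProxOn {u | g u ≠ ⊤} (fun u => (g u).toReal) τ x q := by
  refine ⟨hq.ne_top hτ hb hne, fun u hu => ?_⟩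
  have h := hq u
  rwa [← EReal.coe_toReal (hq.ne_top hτ hb hne) (hb q), ← EReal.coe_toReal hu (hb u),
    ← EReal.coe_mul, ← EReal.coe_add, ← EReal.coe_mul, ← EReal.coe_add,
    EReal.coe_le_coe_iff] at h

lemma IsProxPoint.eq [InnerProductSpace ℝ E] (hτ : 0 < τ) (hg : EConvex g) (hb : ∀ u, g u ≠ ⊥)
    (hne : ∃ u, g u ≠ ⊤) (hq : IsProxPoint g τ x q) (hq' : IsProxPoint g τ x q') : q = q' :=
  (hq.isProxOn hτ hb hne).unique hτ.le (hg.convexOn_toReal hb) (hq'.isProxOn hτ hb hne)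

lemma isProxPoint_inv_iff (hσ : 0 < σ) :
    IsProxPoint g σ⁻¹ x q ↔ ∀ u, g q + ((σ / 2 * ‖q - x‖ ^ 2 : ℝ) : EReal)
      ≤ g u + ((σ / 2 * ‖u - x‖ ^ 2 : ℝ) : EReal) := by
  have hscale : ∀ v, ((σ⁻¹ : ℝ) : EReal) * g v + ((1 / 2 * ‖v - x‖ ^ 2 : ℝ) : EReal)
      = ((σ⁻¹ : ℝ) : EReal) * (g v + ((σ / 2 * ‖v - x‖ ^ 2 : ℝ) : EReal)) := by
    intro v
    rw [EReal.left_distrib_of_nonneg_of_ne_top (EReal.coe_nonneg.mpr (inv_pos.mpr hσ).le)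
      (EReal.coe_ne_top _), ← EReal.coe_mul]
    congr 2
    field_simp
  have hcancel : ∀ a : EReal, (σ : EReal) * (((σ⁻¹ : ℝ) : EReal) * a) = a := by
    intro a
    rw [← mul_assoc, ← EReal.coe_mul, mul_inv_cancel₀ hσ.ne', EReal.coe_one, one_mul]
  simp only [IsProxPoint, hscale]
  refine forall_congr' fun u => ⟨fun h => ?_, fun h => ?_⟩
  · simpa only [hcancel] using mul_le_mul_of_nonneg_left h (EReal.coe_nonneg.mpr hσ.le)
  · exact mul_le_mul_of_nonneg_left h (EReal.coe_nonneg.mpr (inv_pos.mpr hσ).le)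

end ExtendedProx

section Moreau

variable {E : Type*} [NormedAddCommGroup E] [InnerProductSpace ℝ E] {g : E → EReal} {σ : ℝ}

lemma coe_inner_sub_le_conjE (g : E → EReal) (z v : E) :
    ((⟪z, v⟫ : ℝ) : EReal) - g z ≤ conjE g v :=
  le_iSup (fun u => ((⟪u, v⟫ : ℝ) : EReal) - g u) z

lemma conjE_eq_of_forall_inner_le (hb : ∀ u, g u ≠ ⊥) {z v : E} (hz : g z ≠ ⊤)
    (hsub : ∀ w, g w ≠ ⊤ → ⟪v, w - z⟫ ≤ (g w).toReal - (g z).toReal) :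
    conjE g v = ((⟪z, v⟫ - (g z).toReal : ℝ) : EReal) := by
  refine le_antisymm (iSup_le fun w => ?_) ?_
  · by_cases hw : g w = ⊤
    · simp [hw]
    · rw [← EReal.coe_toReal hw (hb w), ← EReal.coe_sub, EReal.coe_le_coe_iff]
      have := hsub w hw
      rw [inner_sub_right] at this
      rw [real_inner_comm v w, real_inner_comm v z]
      linarith
  · have := coe_inner_sub_le_conjE g z v
    rwa [← EReal.coe_toReal hz (hb z), ← EReal.coe_sub] at this

/- Along the affine minorant `v ↦ ⟪z, v⟫ - γ`, the prox objective is `½‖v - u‖²` plus a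
constant, and `φ` touches the minorant at `u`. -/
lemma IsProxPoint.eq_of_affine_minorant {φ : E → EReal} (hσ : 0 < σ) {x p u z : E} {γ : ℝ}
    (hp : IsProxPoint φ σ x p) (hφ : ∀ v, ((⟪z, v⟫ - γ : ℝ) : EReal) ≤ φ v)
    (hu : φ u = ((⟪z, u⟫ - γ : ℝ) : EReal)) (hx : x = u + σ • z) : p = u := by
  set m : E → ℝ := fun v => σ * (⟪z, v⟫ - γ) + 1 / 2 * ‖v - x‖ ^ 2
  have hm : ∀ v, m v = m u + 1 / 2 * ‖v - u‖ ^ 2 := by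
    intro v
    simp only [m, hx]
    rw [show v - (u + σ • z) = (v - u) - σ • z by abel, show u - (u + σ • z) = -(σ • z) by abel,
      norm_sub_sq_real, norm_neg, inner_smul_right, inner_sub_left, real_inner_comm z v,
      real_inner_comm z u]
    ring
  have hle : ((m p : ℝ) : EReal) ≤ ((m u : ℝ) : EReal) :=
    calc ((m p : ℝ) : EReal)
        = (σ : EReal) * ((⟪z, p⟫ - γ : ℝ) : EReal) + ((1 / 2 * ‖p - x‖ ^ 2 : ℝ) : EReal) := by
          simp only [m, EReal.coe_add, EReal.coe_mul]
      _ ≤ (σ : EReal) * φ p + ((1 / 2 * ‖p - x‖ ^ 2 : ℝ) : EReal) :=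
          add_le_add_left (mul_le_mul_of_nonneg_left (hφ p) (EReal.coe_nonneg.mpr hσ.le)) _
      _ ≤ (σ : EReal) * φ u + ((1 / 2 * ‖u - x‖ ^ 2 : ℝ) : EReal) := hp u
      _ = ((m u : ℝ) : EReal) := by simp only [hu, m, EReal.coe_add, EReal.coe_mul]
  rw [EReal.coe_le_coe_iff, hm p] at hle
  have : ‖p - u‖ ^ 2 = 0 := le_antisymm (by linarith) (sq_nonneg _)
  exact sub_eq_zero.mp (norm_eq_zero.mp (pow_eq_zero_iff two_ne_zero |>.mp this))

/-- Moreau decomposition: `Prox_{σ g*}(x) = x - σ Prox_{g/σ}(x/σ)`. -/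
theorem moreau_decomposition (hσ : 0 < σ) (hg : EConvex g) (hb : ∀ u, g u ≠ ⊥)
    (hne : ∃ u, g u ≠ ⊤) {x p q : E} (hq : IsProxPoint g σ⁻¹ (σ⁻¹ • x) q)
    (hp : IsProxPoint (conjE g) σ x p) : p = x - σ • q := by
  have hσ' : 0 < σ⁻¹ := inv_pos.mpr hσ
  have hqfin := hq.ne_top hσ' hb hne
  have hsub : ∀ w, g w ≠ ⊤ → ⟪x - σ • q, w - q⟫ ≤ (g w).toReal - (g q).toReal := by
    intro w hw
    have h := (hq.isProxOn hσ' hb hne).inner_le hσ'.le (hg.convexOn_toReal hb) hw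
    rw [show x - σ • q = σ • (σ⁻¹ • x - q) by
      rw [smul_sub, smul_smul, mul_inv_cancel₀ hσ.ne', one_smul], inner_smul_left]
    calc (starRingEnd ℝ) σ * ⟪σ⁻¹ • x - q, w - q⟫
        ≤ σ * (σ⁻¹ * ((g w).toReal - (g q).toReal)) := mul_le_mul_of_nonneg_left h hσ.le
      _ = (g w).toReal - (g q).toReal := by field_simp
  refine hp.eq_of_affine_minorant hσ (z := q) (γ := (g q).toReal) (fun v => ?_)
    (conjE_eq_of_forall_inner_le hb hqfin hsub) (sub_add_cancel x _).symm
  have := coe_inner_sub_le_conjE g q v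
  rwa [← EReal.coe_toReal hqfin (hb q), ← EReal.coe_sub] at this

end Moreau

section AugmentedLagrangian

variable {A : X →L[ℝ] Y} {c xt : X} {σ : ℝ} {h : Y → EReal} {p : X → EReal} {y : Y}

/-- For fixed `y`, the quadratic part of `z ↦ L_σ(y, z; x̃)` is centered at this point. -/
def alCenter (A : X →L[ℝ] Y) (c : X) (σ : ℝ) (xt : X) (y : Y) : X :=
  σ⁻¹ • xt - (A†) y + c

lemma smul_alCenter (hσ : σ ≠ 0) : σ • alCenter A c σ xt y = xt - σ • ((A†) y - c) := by
  rw [alCenter, smul_add, smul_sub, smul_inv_smul₀ hσ, smul_sub]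
  abel

lemma continuous_alCenter : Continuous (alCenter A c σ xt) :=
  (continuous_const.sub (A†).continuous).add continuous_const

lemma ALfun_eq (hσ : σ ≠ 0) (z : X) :
    ALfun A c h p σ xt (y, z) = h y + (p z + ((σ / 2 * ‖z - alCenter A c σ xt y‖ ^ 2 : ℝ) : EReal))
      + ((-(1 / (2 * σ) * ‖xt‖ ^ 2) : ℝ) : EReal) := by
  have hquad : σ / 2 * ‖(A†) y + z - c‖ ^ 2 - ⟪xt, (A†) y + z - c⟫
      = σ / 2 * ‖z - alCenter A c σ xt y‖ ^ 2 + -(1 / (2 * σ) * ‖xt‖ ^ 2) := by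
    rw [show z - alCenter A c σ xt y = ((A†) y + z - c) - σ⁻¹ • xt by rw [alCenter]; abel]
    generalize (A†) y + z - c = v
    rw [norm_sub_sq_real, inner_smul_right, norm_smul, mul_pow, Real.norm_eq_abs, sq_abs,
      real_inner_comm]
    field_simp
    ring
  rw [ALfun, hquad, EReal.coe_add]
  simp only [add_assoc]

lemma ALfun_le_of_isProxPoint (hσ : 0 < σ) {q : X}
    (hq : IsProxPoint p σ⁻¹ (alCenter A c σ xt y) q) (z : X) :
    ALfun A c h p σ xt (y, q) ≤ ALfun A c h p σ xt (y, z) := by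
  rw [ALfun_eq hσ.ne', ALfun_eq hσ.ne']
  exact add_le_add_left (add_le_add_right ((isProxPoint_inv_iff hσ).mp hq z) _) _

lemma iInf_ALfun_eq (hσ : 0 < σ) {q : X} (hq : IsProxPoint p σ⁻¹ (alCenter A c σ xt y) q) :
    ⨅ z, ALfun A c h p σ xt (y, z) = ALfun A c h p σ xt (y, q) :=
  le_antisymm (iInf_le _ q) (le_iInf (ALfun_le_of_isProxPoint hσ hq))

lemma isProxPoint_of_forall_ALfun_le (hσ : 0 < σ) (hbh : ∀ y, h y ≠ ⊥) (hbp : ∀ z, p z ≠ ⊥)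
    {z₀ : X} (hfin : ALfun A c h p σ xt (y, z₀) ≠ ⊤)
    (hmin : ∀ z, ALfun A c h p σ xt (y, z₀) ≤ ALfun A c h p σ xt (y, z)) :
    IsProxPoint p σ⁻¹ (alCenter A c σ xt y) z₀ := by
  have hy : h y ≠ ⊤ := by
    refine ((EReal.add_ne_top_iff_ne_top₂ (hbh y) (hbp z₀)).mp ?_).1
    exact ((EReal.add_ne_top_iff_ne_top₂ (EReal.add_ne_bot_iff.mpr ⟨hbh y, hbp z₀⟩)
      (EReal.coe_ne_bot _)).mp hfin).1
  rw [isProxPoint_inv_iff hσ]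
  intro z
  have hz := hmin z
  rw [ALfun_eq hσ.ne', ALfun_eq hσ.ne', ← EReal.coe_toReal hy (hbh y)] at hz
  exact (EReal.addLECancellable_coe _).add_le_add_iff_left.mp
    ((EReal.addLECancellable_coe _).add_le_add_iff_right.mp hz)

lemma toReal_iInf_ALfun_eq (hσ : 0 < σ) (hbh : ∀ y, h y ≠ ⊥) (hbp : ∀ z, p z ≠ ⊥)
    (hnep : ∃ z, p z ≠ ⊤) {Pq : X → X} (hPq : ∀ x, IsProxPoint p σ⁻¹ x (Pq x)) (hy : h y ≠ ⊤) :
    (⨅ z, ALfun A c h p σ xt (y, z)).toReal = (h y).toReal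
      + σ * proxValue (fun z => (p z).toReal) σ⁻¹ Pq (alCenter A c σ xt y)
      - 1 / (2 * σ) * ‖xt‖ ^ 2 := by
  rw [iInf_ALfun_eq hσ (hPq _), ALfun_eq hσ.ne', ← EReal.coe_toReal hy (hbh y),
    ← EReal.coe_toReal ((hPq _).ne_top (inv_pos.mpr hσ) hbp hnep) (hbp _), ← EReal.coe_add,
    ← EReal.coe_add, ← EReal.coe_add, EReal.toReal_coe, EReal.toReal_coe, proxValue]
  field_simp
  ring

theorem hasGradientAt_toReal_iInf_ALfun (hσ : 0 < σ) (hpc : EConvex p) (hbh : ∀ y, h y ≠ ⊥)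
    (hbp : ∀ z, p z ≠ ⊥) (hnep : ∃ z, p z ≠ ⊤) {Pq : X → X}
    (hPq : ∀ x, IsProxPoint p σ⁻¹ x (Pq x)) {y₀ : Y} (hy₀ : y₀ ∈ interior {y | h y ≠ ⊤})
    {g : Y} (hg : HasGradientAt (fun y => (h y).toReal) g y₀) :
    HasGradientAt (fun y => (⨅ z, ALfun A c h p σ xt (y, z)).toReal)
      (g - A (σ • (alCenter A c σ xt y₀ - Pq (alCenter A c σ xt y₀)))) y₀ := by
  set s := alCenter A c σ xt
  have hprox := hasGradientAt_proxValue (inv_pos.mpr hσ).le (hpc.convexOn_toReal hbp)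
    (fun x => (hPq x).isProxOn (inv_pos.mpr hσ) hbp hnep) (s y₀)
  have hs : HasFDerivAt s (-(A†)) y₀ :=
    (((A†).hasFDerivAt (x := y₀)).const_sub (σ⁻¹ • xt)).add_const c
  have hψ := ((hasGradientAt_iff_hasFDerivAt.mp hg).add
    (((hasGradientAt_iff_hasFDerivAt.mp hprox).comp y₀ hs).const_mul σ)).sub_const
    (1 / (2 * σ) * ‖xt‖ ^ 2)
  rw [hasGradientAt_iff_hasFDerivAt]
  refine (hψ.congr_fderiv ?_).congr_of_eventuallyEq ?_
  · ext v
    simp only [map_sub, map_smul, ContinuousLinearMap.comp_neg, ContinuousLinearMap.sub_comp,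
      add_apply, smul_apply, sub_apply, ContinuousLinearMap.comp_apply,
      InnerProductSpace.toDual_apply_apply, ContinuousLinearMap.adjoint_inner_right, neg_sub,
      smul_eq_mul]
    ring
  · filter_upwards [isOpen_interior.mem_nhds hy₀] with y hy
    exact toReal_iInf_ALfun_eq hσ hbh hbp hnep hPq (interior_subset hy)

lemma conjE_prox_eq_smul_sub (hσ : 0 < σ) (hpc : EConvex p) (hbp : ∀ z, p z ≠ ⊥)
    (hnep : ∃ z, p z ≠ ⊤) {Pq : X → X} (hPq : ∀ x, IsProxPoint p σ⁻¹ x (Pq x)) {q : X}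
    (hq : IsProxPoint (conjE p) σ (xt - σ • ((A†) y - c)) q) :
    q = σ • (alCenter A c σ xt y - Pq (alCenter A c σ xt y)) := by
  have hdecomp := moreau_decomposition hσ hpc hbp hnep (hPq _) hq
  rwa [← smul_alCenter hσ.ne', inv_smul_smul₀ hσ.ne', ← smul_sub] at hdecomp

theorem forall_ALfun_le_iff (hσ : 0 < σ) (hbh : ∀ y, h y ≠ ⊥) (hneh : ∃ y, h y ≠ ⊤)
    (hpc : EConvex p) (hbp : ∀ z, p z ≠ ⊥) (hnep : ∃ z, p z ≠ ⊤) {Pq : X → X}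
    (hPq : ∀ x, IsProxPoint p σ⁻¹ x (Pq x)) (ybar : Y) (zbar : X) :
    (∀ w, ALfun A c h p σ xt (ybar, zbar) ≤ ALfun A c h p σ xt w) ↔
      (∀ y, ⨅ z, ALfun A c h p σ xt (ybar, z) ≤ ⨅ z, ALfun A c h p σ xt (y, z)) ∧
        zbar = Pq (alCenter A c σ xt ybar) := by
  constructor
  · intro hmin
    refine ⟨fun y => le_iInf fun z => (iInf_le _ zbar).trans (hmin (y, z)), ?_⟩
    have hfin : ALfun A c h p σ xt (ybar, zbar) ≠ ⊤ := by
      obtain ⟨y₁, hy₁⟩ := hneh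
      obtain ⟨z₁, hz₁⟩ := hnep
      exact ne_top_of_le_ne_top (EReal.add_ne_top (EReal.add_ne_top hy₁ hz₁)
        (EReal.coe_ne_top _)) (hmin (y₁, z₁))
    exact (isProxPoint_of_forall_ALfun_le hσ hbh hbp hfin fun z => hmin (ybar, z)).eq
      (inv_pos.mpr hσ) hpc hbp hnep (hPq _)
  · rintro ⟨hψ, rfl⟩ w
    calc ALfun A c h p σ xt (ybar, Pq (alCenter A c σ xt ybar))
        = ⨅ z, ALfun A c h p σ xt (ybar, z) := (iInf_ALfun_eq hσ (hPq _)).symm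
      _ ≤ ⨅ z, ALfun A c h p σ xt (w.1, z) := hψ w.1
      _ ≤ ALfun A c h p σ xt w := iInf_le _ w.2

end AugmentedLagrangian

theorem psi_formula_gradient_and_minimizer_general
    (A : X →L[ℝ] Y) (c : X) (σ : ℝ) (hσ : 0 < σ) (xt : X)
    (hstar : Y → EReal) (pstar : X → EReal) (Gh : Y → Y) (Pp Pq : X → X)
    -- h* and p* are closed proper convex (conjugates of closed proper convex h and p)
    (hconv : EConvex hstar) (hbot : ∀ y, hstar y ≠ ⊥) (hne : ∃ y, hstar y ≠ ⊤)
    (pconv : EConvex pstar) (pbot : ∀ z, pstar z ≠ ⊥) (pne : ∃ z, pstar z ≠ ⊤)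
    -- h* is essentially smooth with gradient Gh on int(dom h*)
    (hgrad : ∀ y ∈ interior {y | hstar y ≠ ⊤},
      HasGradientAt (fun w => (hstar w).toReal) (Gh y) y)
    -- Pp = Prox_{σp}, where p = (p*)* is the function whose conjugate is p*
    (hPp : ∀ x u : X,
      ((σ : ℝ) : EReal) * conjE pstar (Pp x) + (((1 / 2) * ‖Pp x - x‖ ^ 2 : ℝ) : EReal) ≤
        ((σ : ℝ) : EReal) * conjE pstar u + (((1 / 2) * ‖u - x‖ ^ 2 : ℝ) : EReal))
    -- Pq = Prox_{p*/σ}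
    (hPq : ∀ x u : X,
      ((σ⁻¹ : ℝ) : EReal) * pstar (Pq x) + (((1 / 2) * ‖Pq x - x‖ ^ 2 : ℝ) : EReal) ≤
        ((σ⁻¹ : ℝ) : EReal) * pstar u + (((1 / 2) * ‖u - x‖ ^ 2 : ℝ) : EReal)) :
    -- (a) the closed form expression of ψ(y) = inf_z Ψ(y,z)
    (∀ y : Y,
      (⨅ z : X, ALfun A c hstar pstar σ xt (y, z)) =
        hstar y + pstar (Pq (σ⁻¹ • xt - ContinuousLinearMap.adjoint A y + c)) +
          (((1 / (2 * σ)) * ‖Pp (xt - σ • (ContinuousLinearMap.adjoint A y - c))‖ ^ 2 -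
              (1 / (2 * σ)) * ‖xt‖ ^ 2 : ℝ) : EReal)) ∧
    -- (b) ψ is continuously differentiable on int(dom h*) with the stated gradient
    (∀ y ∈ interior {w : Y | hstar w ≠ ⊤},
      HasGradientAt (fun w : Y => (⨅ z : X, ALfun A c hstar pstar σ xt (w, z)).toReal)
        (Gh y - A (Pp (xt - σ • (ContinuousLinearMap.adjoint A y - c)))) y) ∧
    ContinuousOn (fun y : Y => Gh y - A (Pp (xt - σ • (ContinuousLinearMap.adjoint A y - c))))
      (interior {w : Y | hstar w ≠ ⊤}) ∧
    -- (c) characterization of the minimizer of Ψ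
    (∀ (ybar : Y) (zbar : X),
      (∀ w : Y × X, ALfun A c hstar pstar σ xt (ybar, zbar) ≤ ALfun A c hstar pstar σ xt w) ↔
      ((∀ y : Y, (⨅ z : X, ALfun A c hstar pstar σ xt (ybar, z)) ≤
          ⨅ z : X, ALfun A c hstar pstar σ xt (y, z)) ∧
        zbar = Pq (σ⁻¹ • xt - ContinuousLinearMap.adjoint A ybar + c))) := by
  have hPp_eq : ∀ y, Pp (xt - σ • (ContinuousLinearMap.adjoint A y - c))
      = σ • (alCenter A c σ xt y - Pq (alCenter A c σ xt y)) := fun y =>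
    conjE_prox_eq_smul_sub hσ pconv pbot pne hPq (hPp _)
  have hPq_cont : Continuous Pq :=
    (lipschitzWith_one_of_isProxOn (inv_pos.mpr hσ).le (pconv.convexOn_toReal pbot)
      fun x => IsProxPoint.isProxOn (inv_pos.mpr hσ) pbot pne (hPq x)).continuous
  have hh_conv := hconv.convexOn_toReal hbot
  refine ⟨fun y => ?_, fun y hy => ?_, ?_, forall_ALfun_le_iff hσ hbot hne pconv pbot pne hPq⟩
  · rw [iInf_ALfun_eq hσ (hPq _), hPp_eq, ALfun_eq hσ.ne', ← add_assoc, add_assoc _ _ (_ : EReal),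
      ← EReal.coe_add, norm_smul, norm_sub_rev, mul_pow, Real.norm_of_nonneg hσ.le]
    congr 2
    field_simp
    ring
  · rw [hPp_eq]
    exact hasGradientAt_toReal_iInf_ALfun hσ pconv hbot pbot pne hPq hy (hgrad y hy)
  · simp only [hPp_eq]
    refine (ConvexOn.continuousOn_of_hasGradientAt isOpen_interior
      (hh_conv.subset interior_subset hh_conv.1.interior) hgrad).sub ?_
    have hs := continuous_alCenter (A := A) (c := c) (σ := σ) (xt := xt)
    exact (A.continuous.comp ((hs.sub (hPq_cont.comp hs)).const_smul σ)).continuousOn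

theorem psi_formula_gradient_and_minimizer
    (A : X →L[ℝ] Y) (c : X) (σ : ℝ) (hσ : 0 < σ) (xt : X)
    (hstar : Y → EReal) (pstar : X → EReal) (Gh : Y → Y) (Pp Pq : X → X)
    -- h* and p* are closed proper convex (conjugates of closed proper convex h and p)
    (hconv : EConvex hstar) (hlsc : LowerSemicontinuous hstar)
    (hbot : ∀ y, hstar y ≠ ⊥) (hne : ∃ y, hstar y ≠ ⊤)
    (pconv : EConvex pstar) (plsc : LowerSemicontinuous pstar)
    (pbot : ∀ z, pstar z ≠ ⊥) (pne : ∃ z, pstar z ≠ ⊤)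
    -- h* is essentially smooth with gradient Gh on int(dom h*)
    (hintne : (interior {y | hstar y ≠ ⊤}).Nonempty)
    (hgrad : ∀ y ∈ interior {y | hstar y ≠ ⊤},
      HasGradientAt (fun w => (hstar w).toReal) (Gh y) y)
    (hblow : ∀ yb ∈ frontier (interior {y | hstar y ≠ ⊤}), ∀ u : ℕ → Y,
      (∀ n, u n ∈ interior {y | hstar y ≠ ⊤}) → Tendsto u atTop (𝓝 yb) →
      Tendsto (fun n => ‖Gh (u n)‖) atTop atTop)
    -- Pp = Prox_{σp}, where p = (p*)* is the function whose conjugate is p*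
    (hPp : ∀ x u : X,
      ((σ : ℝ) : EReal) * conjE pstar (Pp x) + (((1 / 2) * ‖Pp x - x‖ ^ 2 : ℝ) : EReal) ≤
        ((σ : ℝ) : EReal) * conjE pstar u + (((1 / 2) * ‖u - x‖ ^ 2 : ℝ) : EReal))
    -- Pq = Prox_{p*/σ}
    (hPq : ∀ x u : X,
      ((σ⁻¹ : ℝ) : EReal) * pstar (Pq x) + (((1 / 2) * ‖Pq x - x‖ ^ 2 : ℝ) : EReal) ≤
        ((σ⁻¹ : ℝ) : EReal) * pstar u + (((1 / 2) * ‖u - x‖ ^ 2 : ℝ) : EReal)) :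
    -- (a) the closed form expression of ψ(y) = inf_z Ψ(y,z)
    (∀ y : Y,
      (⨅ z : X, ALfun A c hstar pstar σ xt (y, z)) =
        hstar y + pstar (Pq (σ⁻¹ • xt - ContinuousLinearMap.adjoint A y + c)) +
          (((1 / (2 * σ)) * ‖Pp (xt - σ • (ContinuousLinearMap.adjoint A y - c))‖ ^ 2 -
              (1 / (2 * σ)) * ‖xt‖ ^ 2 : ℝ) : EReal)) ∧
    -- (b) ψ is continuously differentiable on int(dom h*) with the stated gradient
    (∀ y ∈ interior {w : Y | hstar w ≠ ⊤},
      HasGradientAt (fun w : Y => (⨅ z : X, ALfun A c hstar pstar σ xt (w, z)).toReal)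
        (Gh y - A (Pp (xt - σ • (ContinuousLinearMap.adjoint A y - c)))) y) ∧
    ContinuousOn (fun y : Y => Gh y - A (Pp (xt - σ • (ContinuousLinearMap.adjoint A y - c))))
      (interior {w : Y | hstar w ≠ ⊤}) ∧
    -- (c) characterization of the minimizer of Ψ
    (∀ (ybar : Y) (zbar : X),
      (∀ w : Y × X, ALfun A c hstar pstar σ xt (ybar, zbar) ≤ ALfun A c hstar pstar σ xt w) ↔
      ((∀ y : Y, (⨅ z : X, ALfun A c hstar pstar σ xt (ybar, z)) ≤
          ⨅ z : X, ALfun A c hstar pstar σ xt (y, z)) ∧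
        zbar = Pq (σ⁻¹ • xt - ContinuousLinearMap.adjoint A ybar + c))) :=
  psi_formula_gradient_and_minimizer_general A c σ hσ xt hstar pstar Gh Pp Pq hconv hbot hne pconv
    pbot pne hgrad hPp hPq
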